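/- arXiv:1904.00377 — 2 statements merged into one kernel-verified Lean document; each statement's English description precedes it below -/
import Mathlib

section
/- For every Z ≥ 1 and every θ ∈ (0,1) there exists a neural network Φ with input dimension 2 and output dimension 1 such that: (i) L(Φ) ≤ (1/2)·log₂(1/θ) + log₂(Z) + 6; (ii) M(Φ) ≤ 90·(log₂(1/θ) + 2·log₂(Z) + 6); (iii) M_1(Φ) ≤ 16 and M_{L(Φ)}(Φ) ≤ 3; (iv) sup over all a, b ∈ ℝ with |a| ≤ Z and |b| ≤ Z of |a·b − R(Φ)(a,b)| ≤ θ, where R(Φ) denotes the ReLU-realization of Φ over [−Z,Z]². -/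
/-!
Formalization infrastructure: feed-forward ReLU neural networks.

A neural network is a nonempty list of layers.  Each layer stores an
"infinite" matrix `A : ℕ → ℕ → ℝ`, a bias `b : ℕ → ℝ` and the output
dimension `out` of the layer; only the entries of `A` (resp. `b`) inside the
block determined by the input/output dimensions are relevant: they are the
only entries used by the realization and the only entries counted as weights.
-/

noncomputable section

structure Layer where
  A : ℕ → ℕ → ℝ
  b : ℕ → ℝ
  out : ℕ

instance : Inhabited Layer := ⟨⟨fun _ _ => 0, fun _ => 0, 0⟩⟩

/-- A neural network: an input dimension together with a nonempty list of layers. -/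
structure NN where
  inDim : ℕ
  layers : List Layer
  ne : layers ≠ []

namespace NN

/-- number of layers `L(Φ)` -/
def depth (Φ : NN) : ℕ := Φ.layers.length

/-- the dimensions `N_0 = n, N_1, …, N_L` -/
def dims (Φ : NN) : ℕ → ℕ
  | 0 => Φ.inDim
  | ℓ + 1 => (Φ.layers.getD ℓ default).out

/-- output dimension `N_L` -/
def outDim (Φ : NN) : ℕ := Φ.dims Φ.depth

end NN

/-- number of nonzero entries of the `r × c` block of `A` -/
def matCount (A : ℕ → ℕ → ℝ) (r c : ℕ) : ℕ :=
  ((Finset.range r ×ˢ Finset.range c).filter fun p => A p.1 p.2 ≠ 0).card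

/-- number of nonzero entries of the first `r` entries of `b` -/
def vecCount (b : ℕ → ℝ) (r : ℕ) : ℕ :=
  ((Finset.range r).filter fun i => b i ≠ 0).card

/-- `M_ℓ(Φ)`: the number of nonzero weights in layer `ℓ ∈ {1, …, L}` -/
def NN.Msub (Φ : NN) (ℓ : ℕ) : ℕ :=
  matCount (Φ.layers.getD (ℓ - 1) default).A (Φ.dims ℓ) (Φ.dims (ℓ - 1)) +
    vecCount (Φ.layers.getD (ℓ - 1) default).b (Φ.dims ℓ)

/-- `M(Φ)`: the number of nonzero weights of `Φ` -/
def NN.M (Φ : NN) : ℕ := ∑ ℓ ∈ Finset.Icc 1 Φ.depth, Φ.Msub ℓ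

/-- affine map of a layer, contracting over the first `n` coordinates -/
def applyLayer (ly : Layer) (n : ℕ) (v : ℕ → ℝ) : ℕ → ℝ :=
  fun i => (∑ j ∈ Finset.range n, ly.A i j * v j) + ly.b i

/-- forward pass through a list of layers: the ReLU `t ↦ max t 0` is applied
after every layer except the last one. -/
def fwdList : List Layer → ℕ → (ℕ → ℝ) → (ℕ → ℝ)
  | [], _, v => v
  | [ly], n, v => applyLayer ly n v
  | ly :: rest, n, v => fwdList rest ly.out fun i => max (applyLayer ly n v i) 0

def NN.fwd (Φ : NN) (x : ℕ → ℝ) : ℕ → ℝ := fwdList Φ.layers Φ.inDim x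

/-- extension of a finite vector by zero -/
def zext {n : ℕ} (x : Fin n → ℝ) : ℕ → ℝ := fun j => if h : j < n then x ⟨j, h⟩ else 0

/-- The ReLU-realization of `Φ`, as a map `ℝ^n → ℝ^m`.  When `Φ.inDim = n` and
`Φ.outDim = m` this is exactly the realization `R(Φ)`. -/
def NN.realize (Φ : NN) {n m : ℕ} (x : Fin n → ℝ) : Fin m → ℝ :=
  fun i => Φ.fwd (zext x) i.1

end

open Matrix Set

/-!
Yarotsky's sawtooth construction. Let `g(y) = 2y − 4ρ(y − 1/2)` be the tooth map, which on `[0, 1]`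
is the hat function and satisfies `4(y − y²) = 2g(y) − g(y)²`. By induction, the partial sums
`f_m(x) = x − ∑_{k=1}^m g^k(x) / 4^k` satisfy `f_m(x) − x² = (g^m(x) − g^m(x)²) / 4^m ∈ [0, 4^{-(m+1)}]`
for `x ∈ [0, 1]`. One hidden ReLU layer of width three turns `(g^k, ρ(g^k − 1/2), f_k)` into the
same triple at `k + 1`, so `m` layers approximate the square on `[0, 1]` to accuracy `4^{-(m+1)}`.

By polarization `ab = Z²(u² − v²)` with `u = (a + b)/(2Z)`, `v = (a − b)/(2Z)` in `[−1, 1]`; two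
such blocks run in parallel on `|u|` and `|v|` (obtained as `ρ(u) + ρ(−u)`), so the error is at most
`Z² / 4^(m+1)`, and `m = ⌈log₂(1/θ)/2 + log₂ Z⌉` gives `4^m ≥ Z²/θ`.
-/

noncomputable section

def extMat {r c : ℕ} (M : Matrix (Fin r) (Fin c) ℝ) : ℕ → ℕ → ℝ :=
  fun i j => if h : i < r ∧ j < c then M ⟨i, h.1⟩ ⟨j, h.2⟩ else 0

def affineLayer {r c : ℕ} (M : Matrix (Fin r) (Fin c) ℝ) (β : Fin r → ℝ) : Layer :=
  ⟨extMat M, zext β, r⟩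

def relu {n : ℕ} (y : Fin n → ℝ) : Fin n → ℝ := fun k => max (y k) 0

lemma applyLayer_affineLayer {r c : ℕ} (M : Matrix (Fin r) (Fin c) ℝ) (β : Fin r → ℝ)
    (x : Fin c → ℝ) : applyLayer (affineLayer M β) c (zext x) = zext (M *ᵥ x + β) := by
  funext i
  by_cases hi : i < r
  · simp [applyLayer, affineLayer, extMat, zext, hi, Finset.sum_range, mulVec, dotProduct]
  · simp [applyLayer, affineLayer, extMat, zext, hi]

lemma max_zext_zero {n : ℕ} (y : Fin n → ℝ) : (fun i => max (zext y i) 0) = zext (relu y) := by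
  funext i
  by_cases hi : i < n <;> simp [zext, relu, hi]

lemma fwdList_affineLayer_cons {r c : ℕ} (M : Matrix (Fin r) (Fin c) ℝ) (β : Fin r → ℝ)
    {rest : List Layer} (hrest : rest ≠ []) (x : Fin c → ℝ) :
    fwdList (affineLayer M β :: rest) c (zext x) = fwdList rest r (zext (relu (M *ᵥ x + β))) := by
  obtain ⟨ly, rest, rfl⟩ := List.exists_cons_of_ne_nil hrest
  simp only [fwdList, applyLayer_affineLayer, max_zext_zero]
  rfl

lemma fwdList_affineLayer_singleton {r c : ℕ} (M : Matrix (Fin r) (Fin c) ℝ) (β : Fin r → ℝ)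
    (x : Fin c → ℝ) : fwdList [affineLayer M β] c (zext x) = zext (M *ᵥ x + β) :=
  applyLayer_affineLayer M β x

namespace NN

lemma Msub_le (Φ : NN) (ℓ : ℕ) : Φ.Msub ℓ ≤ Φ.dims ℓ * Φ.dims (ℓ - 1) + Φ.dims ℓ :=
  Nat.add_le_add ((Finset.card_filter_le _ _).trans (by simp))
    ((Finset.card_filter_le _ _).trans (by simp))

lemma dims_le {Φ : NN} {d : ℕ} (h₀ : Φ.inDim ≤ d) (h : ∀ ly ∈ Φ.layers, ly.out ≤ d) :
    ∀ ℓ, Φ.dims ℓ ≤ d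
  | 0 => h₀
  | ℓ + 1 => by
    rw [dims, List.getD_eq_getElem?_getD]
    cases hℓ : Φ.layers[ℓ]? with
    | none => exact Nat.zero_le d
    | some ly => exact h ly (List.mem_of_getElem? hℓ)

lemma M_le {Φ : NN} {d : ℕ} (h : ∀ ℓ, Φ.dims ℓ ≤ d) : Φ.M ≤ Φ.depth * (d * d + d) := by
  calc Φ.M ≤ ∑ _ℓ ∈ Finset.Icc 1 Φ.depth, (d * d + d) :=
        Finset.sum_le_sum fun ℓ _ => (Φ.Msub_le ℓ).trans
          (Nat.add_le_add (Nat.mul_le_mul (h ℓ) (h _)) (h ℓ))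
    _ = Φ.depth * (d * d + d) := by simp

end NN

def tooth (y : ℝ) : ℝ := 2 * y - 4 * max (y - 1 / 2) 0

lemma four_mul_sub_sq_eq (y : ℝ) : 4 * (y - y ^ 2) = 2 * tooth y - tooth y ^ 2 := by
  rcases le_total y (1 / 2) with h | h
  · rw [tooth, max_eq_right (by linarith)]; ring
  · rw [tooth, max_eq_left (by linarith)]; ring

lemma mapsTo_tooth : MapsTo tooth (Icc 0 1) (Icc 0 1) := by
  rintro y ⟨h₀, h₁⟩
  rcases le_total y (1 / 2) with h | h
  · rw [tooth, max_eq_right (by linarith)]; constructor <;> linarith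
  · rw [tooth, max_eq_left (by linarith)]; constructor <;> linarith

lemma tooth_iterate_succ (s : ℕ) (x : ℝ) :
    2 * tooth^[s] x - 4 * max (tooth^[s] x - 1 / 2) 0 = tooth^[s + 1] x := by
  rw [Function.iterate_succ_apply']; rfl

def sqApprox (s : ℕ) (x : ℝ) : ℝ := x - ∑ k ∈ Finset.range s, tooth^[k + 1] x / 4 ^ (k + 1)

lemma sqApprox_zero (x : ℝ) : sqApprox 0 x = x := by simp [sqApprox]

lemma sqApprox_succ (s : ℕ) (x : ℝ) :
    sqApprox (s + 1) x = sqApprox s x - tooth^[s + 1] x / 4 ^ (s + 1) := by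
  simp only [sqApprox, Finset.sum_range_succ]; ring

lemma sqApprox_sub_sq (s : ℕ) (x : ℝ) :
    sqApprox s x - x ^ 2 = (tooth^[s] x - (tooth^[s] x) ^ 2) / 4 ^ s := by
  induction s with
  | zero => simp [sqApprox_zero]
  | succ s ih =>
    have key : 4 * (tooth^[s] x - (tooth^[s] x) ^ 2) =
        2 * tooth^[s + 1] x - (tooth^[s + 1] x) ^ 2 := by
      rw [Function.iterate_succ_apply']; exact four_mul_sub_sq_eq _
    rw [sqApprox_succ, sub_right_comm, ih, pow_succ]
    field_simp
    linear_combination (4 : ℝ) ^ s * key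

lemma sqApprox_sub_sq_mem_Icc {x : ℝ} (hx : x ∈ Icc 0 1) (s : ℕ) :
    sqApprox s x - x ^ 2 ∈ Icc 0 (1 / 4 ^ (s + 1)) := by
  obtain ⟨h₀, h₁⟩ := mapsTo_tooth.iterate s hx
  rw [sqApprox_sub_sq, pow_succ', ← div_div]
  constructor
  · exact div_nonneg (by nlinarith) (by positivity)
  · gcongr
    nlinarith [sq_nonneg (tooth^[s] x - 1 / 2)]

lemma sqApprox_nonneg {x : ℝ} (hx : x ∈ Icc 0 1) (s : ℕ) : 0 ≤ sqApprox s x := by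
  nlinarith [(sqApprox_sub_sq_mem_Icc hx s).1, sq_nonneg x]

lemma abs_sq_sub_sq_sub_sqApprox_le {x y : ℝ} (hx : x ∈ Icc 0 1) (hy : y ∈ Icc 0 1) (s : ℕ) :
    |(x ^ 2 - y ^ 2) - (sqApprox s x - sqApprox s y)| ≤ 1 / 4 ^ (s + 1) := by
  obtain ⟨hx₀, hx₁⟩ := sqApprox_sub_sq_mem_Icc hx s
  obtain ⟨hy₀, hy₁⟩ := sqApprox_sub_sq_mem_Icc hy s
  calc |(x ^ 2 - y ^ 2) - (sqApprox s x - sqApprox s y)|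
      = |(sqApprox s y - y ^ 2) - (sqApprox s x - x ^ 2)| := by ring_nf
    _ ≤ 1 / 4 ^ (s + 1) := abs_sub_le_of_nonneg_of_le hy₀ hy₁ hx₀ hx₁

namespace ScalarMul

def inputMat (Z : ℝ) : Matrix (Fin 4) (Fin 2) ℝ :=
  (2 * Z)⁻¹ • !![1, 1; -1, -1; 1, -1; -1, 1]

def absMat : Matrix (Fin 6) (Fin 4) ℝ :=
  !![1, 1, 0, 0; 1, 1, 0, 0; 1, 1, 0, 0; 0, 0, 1, 1; 0, 0, 1, 1; 0, 0, 1, 1]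

/-- In each block of three channels, `g ↦ 2g − 4ρ(g − 1/2)` is the tooth map, and the third row
subtracts its `4^t`-th part from the running partial sum. -/
def stepMat (t : ℕ) : Matrix (Fin 6) (Fin 6) ℝ :=
  !![2, -4, 0, 0, 0, 0;
     2, -4, 0, 0, 0, 0;
     -2 / 4 ^ t, 4 / 4 ^ t, 1, 0, 0, 0;
     0, 0, 0, 2, -4, 0;
     0, 0, 0, 2, -4, 0;
     0, 0, 0, -2 / 4 ^ t, 4 / 4 ^ t, 1]

def sawBias : Fin 6 → ℝ := ![0, -1 / 2, 0, 0, -1 / 2, 0]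

def readMat : Matrix (Fin 2) (Fin 6) ℝ := !![0, 0, 1, 0, 0, 0; 0, 0, 0, 0, 0, 1]

def outMat (Z : ℝ) : Matrix (Fin 1) (Fin 2) ℝ := !![Z ^ 2, -Z ^ 2]

/-- The read-out layer keeps only the two partial sums, so that the last layer has
`1 · 2 + 1 = 3` weights. -/
def net (Z : ℝ) (m : ℕ) : NN where
  inDim := 2
  layers := affineLayer (inputMat Z) 0 :: affineLayer absMat sawBias ::
    ((List.range' 1 m).map (fun t => affineLayer (stepMat t) sawBias) ++
      [affineLayer readMat 0, affineLayer (outMat Z) 0])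
  ne := List.cons_ne_nil _ _

lemma net_depth (Z : ℝ) (m : ℕ) : (net Z m).depth = m + 4 := by
  simp [NN.depth, net]

lemma net_dims_le (Z : ℝ) (m : ℕ) : ∀ ℓ, (net Z m).dims ℓ ≤ 6 := by
  refine NN.dims_le (by simp [net]) ?_
  simp only [net, List.mem_cons, List.mem_append, List.mem_map, List.not_mem_nil, or_false]
  rintro ly (rfl | rfl | ⟨t, -, rfl⟩ | rfl | rfl) <;> simp [affineLayer]

lemma net_dims_depth (Z : ℝ) (m : ℕ) : (net Z m).dims (m + 4) = 1 := by
  simp [NN.dims, net, affineLayer]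

lemma net_dims_depth_sub_one (Z : ℝ) (m : ℕ) : (net Z m).dims (m + 3) = 2 := by
  simp [NN.dims, net, affineLayer]

def sawState (s : ℕ) (x y : ℝ) : Fin 6 → ℝ :=
  ![tooth^[s] x, max (tooth^[s] x - 1 / 2) 0, sqApprox s x,
    tooth^[s] y, max (tooth^[s] y - 1 / 2) 0, sqApprox s y]

lemma relu_absMat_relu_inputMat (Z a b : ℝ) :
    relu (absMat *ᵥ relu (inputMat Z *ᵥ ![a, b] + 0) + sawBias) =
      sawState 0 |(a + b) / (2 * Z)| |(a - b) / (2 * Z)| := by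
  have hin : relu (inputMat Z *ᵥ ![a, b] + 0) =
      ![max ((a + b) / (2 * Z)) 0, max (-((a + b) / (2 * Z))) 0,
        max ((a - b) / (2 * Z)) 0, max (-((a - b) / (2 * Z))) 0] := by
    ext k
    fin_cases k <;> simp [relu, inputMat] <;> ring_nf
  rw [hin]
  ext k
  fin_cases k <;> simp [absMat, sawBias, sawState, relu,
    max_zero_add_max_neg_zero_eq_abs_self, sqApprox_zero] <;> ring_nf

lemma stepMat_mulVec_add (t : ℕ) (v : Fin 6 → ℝ) : stepMat t *ᵥ v + sawBias =
    ![2 * v 0 - 4 * v 1, 2 * v 0 - 4 * v 1 - 1 / 2, v 2 - (2 * v 0 - 4 * v 1) / 4 ^ t,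
      2 * v 3 - 4 * v 4, 2 * v 3 - 4 * v 4 - 1 / 2, v 5 - (2 * v 3 - 4 * v 4) / 4 ^ t] := by
  ext k
  fin_cases k <;> simp [stepMat, sawBias, Fin.sum_univ_succ, dotProduct] <;> ring

lemma relu_stepMat {x y : ℝ} (hx : x ∈ Icc 0 1) (hy : y ∈ Icc 0 1) (s : ℕ) :
    relu (stepMat (s + 1) *ᵥ sawState s x y + sawBias) = sawState (s + 1) x y := by
  have hgx := (mapsTo_tooth.iterate (s + 1) hx).1
  have hgy := (mapsTo_tooth.iterate (s + 1) hy).1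
  have hfx := sqApprox_nonneg hx (s + 1)
  have hfy := sqApprox_nonneg hy (s + 1)
  rw [stepMat_mulVec_add]
  simp only [sawState, Matrix.cons_val, tooth_iterate_succ, ← sqApprox_succ]
  ext k
  fin_cases k <;> simp [relu, hgx, hgy, hfx, hfy, -Function.iterate_succ]

lemma fwdList_stepLayers {x y : ℝ} (hx : x ∈ Icc 0 1) (hy : y ∈ Icc 0 1) {tail : List Layer}
    (htail : tail ≠ []) (k s : ℕ) :
    fwdList ((List.range' (s + 1) k).map (fun t => affineLayer (stepMat t) sawBias) ++ tail) 6
      (zext (sawState s x y)) = fwdList tail 6 (zext (sawState (s + k) x y)) := by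
  induction k generalizing s with
  | zero => rfl
  | succ k ih =>
    rw [List.range'_succ, List.map_cons, List.cons_append,
      fwdList_affineLayer_cons _ _ (by simp [htail]), relu_stepMat hx hy, ih,
      Nat.add_assoc, Nat.add_comm 1 k]

lemma outMat_mulVec_relu_readMat (Z : ℝ) {x y : ℝ} (hx : x ∈ Icc 0 1) (hy : y ∈ Icc 0 1)
    (s : ℕ) : (outMat Z *ᵥ relu (readMat *ᵥ sawState s x y + 0) + 0) 0 =
      Z ^ 2 * (sqApprox s x - sqApprox s y) := by
  simp [outMat, readMat, sawState, relu, dotProduct, Fin.sum_univ_succ, sqApprox_nonneg hx,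
    sqApprox_nonneg hy]
  ring

lemma realize_net (Z a b : ℝ) (m : ℕ) (hu : |(a + b) / (2 * Z)| ∈ Icc 0 1)
    (hv : |(a - b) / (2 * Z)| ∈ Icc 0 1) :
    ((net Z m).realize ![a, b] : Fin 1 → ℝ) 0 =
      Z ^ 2 * (sqApprox m |(a + b) / (2 * Z)| - sqApprox m |(a - b) / (2 * Z)|) := by
  have hsteps := fwdList_stepLayers hu hv (tail := [affineLayer readMat 0,
    affineLayer (outMat Z) 0]) (by simp) m 0
  rw [zero_add, zero_add] at hsteps
  show fwdList (net Z m).layers 2 (zext ![a, b]) 0 = _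
  rw [net, fwdList_affineLayer_cons _ _ (by simp), fwdList_affineLayer_cons _ _ (by simp),
    relu_absMat_relu_inputMat, hsteps, fwdList_affineLayer_cons _ _ (by simp),
    fwdList_affineLayer_singleton]
  simpa [zext] using outMat_mulVec_relu_readMat Z hu hv m

lemma abs_div_mem_Icc {c d : ℝ} (hd : 0 < d) (h : |c| ≤ d) : |c / d| ∈ Icc 0 1 :=
  ⟨abs_nonneg _, by rwa [abs_div, abs_of_pos hd, div_le_one hd]⟩

lemma abs_mul_sub_realize_net_le {Z : ℝ} (hZ : 0 < Z) {a b : ℝ} (ha : |a| ≤ Z) (hb : |b| ≤ Z)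
    (m : ℕ) : |a * b - ((net Z m).realize ![a, b] : Fin 1 → ℝ) 0| ≤ Z ^ 2 / 4 ^ (m + 1) := by
  have hu := abs_div_mem_Icc (by positivity : 0 < 2 * Z) (c := a + b)
    (by linarith [abs_add_le a b])
  have hv := abs_div_mem_Icc (by positivity : 0 < 2 * Z) (c := a - b)
    (by linarith [abs_sub a b])
  have hab : a * b = Z ^ 2 * (|(a + b) / (2 * Z)| ^ 2 - |(a - b) / (2 * Z)| ^ 2) := by
    rw [sq_abs, sq_abs]; field_simp; ring
  rw [realize_net Z a b m hu hv, hab, ← mul_sub, abs_mul, abs_of_nonneg (sq_nonneg Z)]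
  exact (mul_le_mul_of_nonneg_left (abs_sq_sub_sq_sub_sqApprox_le hu hv m) (sq_nonneg Z)).trans_eq
    (mul_one_div _ _)

end ScalarMul

end

lemma sq_le_mul_four_pow_ceil {Z θ : ℝ} (hZ : 0 < Z) (hθ : 0 < θ) :
    Z ^ 2 ≤ θ * 4 ^ ⌈Real.logb 2 (1 / θ) / 2 + Real.logb 2 Z⌉₊ := by
  set m := ⌈Real.logb 2 (1 / θ) / 2 + Real.logb 2 Z⌉₊
  have hlog : Real.logb 2 (Z ^ 2 / θ) ≤ (2 * m : ℕ) := by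
    rw [div_eq_mul_one_div, Real.logb_mul (by positivity) (by positivity), Real.logb_pow]
    push_cast
    linarith [Nat.le_ceil (Real.logb 2 (1 / θ) / 2 + Real.logb 2 Z)]
  rw [Real.logb_le_iff_le_rpow one_lt_two (by positivity), Real.rpow_natCast, pow_mul,
    div_le_iff₀ hθ] at hlog
  norm_num at hlog
  linarith

/-- approximate scalar multiplication by ReLU networks.
For every `Z ≥ 1` and `θ ∈ (0,1)` there exists a network `Φ` with input
dimension 2 and output dimension 1 such that
(i) `L(Φ) ≤ (1/2) log₂(1/θ) + log₂ Z + 6`;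
(ii) `M(Φ) ≤ 90 (log₂(1/θ) + 2 log₂ Z + 6)`;
(iii) `M_1(Φ) ≤ 16` and `M_{L(Φ)}(Φ) ≤ 3`;
(iv) `sup_{|a|,|b| ≤ Z} |a b − R(Φ)(a,b)| ≤ θ`. -/
theorem scalar_multiplication_network (Z : ℝ) (hZ : 1 ≤ Z) (θ : ℝ)
    (hθ0 : 0 < θ) (hθ1 : θ < 1) :
    ∃ Φ : NN, Φ.inDim = 2 ∧ Φ.outDim = 1 ∧
      (Φ.depth : ℝ) ≤ 1 / 2 * Real.logb 2 (1 / θ) + Real.logb 2 Z + 6 ∧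
      (Φ.M : ℝ) ≤ 90 * (Real.logb 2 (1 / θ) + 2 * Real.logb 2 Z + 6) ∧
      Φ.Msub 1 ≤ 16 ∧ Φ.Msub Φ.depth ≤ 3 ∧
      ∀ a b : ℝ, |a| ≤ Z → |b| ≤ Z →
        |a * b - (Φ.realize ![a, b] : Fin 1 → ℝ) 0| ≤ θ := by
  open ScalarMul in
  have hZ₀ : 0 < Z := by linarith
  have hlogθ : 0 < Real.logb 2 (1 / θ) :=
    Real.logb_pos one_lt_two (by rw [lt_one_div one_pos hθ0, div_one]; exact hθ1)
  have hlogZ : 0 ≤ Real.logb 2 Z := Real.logb_nonneg one_lt_two hZ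
  set m := ⌈Real.logb 2 (1 / θ) / 2 + Real.logb 2 Z⌉₊
  have hm_lt : (m : ℝ) < Real.logb 2 (1 / θ) / 2 + Real.logb 2 Z + 1 :=
    Nat.ceil_lt_add_one (by positivity)
  have hM : ((net Z m).M : ℝ) ≤ (m + 4) * 42 := by
    exact_mod_cast net_depth Z m ▸ NN.M_le (net_dims_le Z m)
  refine ⟨net Z m, rfl, by rw [NN.outDim, net_depth, net_dims_depth], ?_, by linarith,
    (NN.Msub_le _ 1).trans (by simp [NN.dims, net, affineLayer]), ?_, fun a b ha hb => ?_⟩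
  · rw [net_depth]; push_cast; linarith
  · rw [net_depth]
    refine (NN.Msub_le _ _).trans ?_
    rw [show m + 4 - 1 = m + 3 from rfl, net_dims_depth, net_dims_depth_sub_one]
  · calc _ ≤ Z ^ 2 / 4 ^ (m + 1) := abs_mul_sub_realize_net_le hZ₀ ha hb m
      _ ≤ Z ^ 2 / 4 ^ m := by gcongr <;> norm_num
      _ ≤ θ := by rw [div_le_iff₀ (by positivity)]; exact sq_le_mul_four_pow_ceil hZ₀ hθ0
end

section
/- Let V be a real normed vector space, let N ∈ ℕ, and let X ⊆ V be a nonempty compact subset. Define the Kolmogorov N-width W_N(X) := inf over all linear subspaces V_N of V with dim(V_N) ≤ N of sup_{x ∈ X} dist(x, V_N), and the inner N-width W̄_N(X) := inf over all linear subspaces of the form V_N = span{x_1,…,x_N} with x_1,…,x_N ∈ X of sup_{x ∈ X} dist(x, V_N). Then W̄_N(X) ≤ (N+1)·W_N(X). -/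
noncomputable section

/-- the Kolmogorov `N`-width `W_N(X)`: the infimum, over all linear subspaces
`V_N ⊆ V` with `dim(V_N) ≤ N`, of `sup_{x ∈ X} dist(x, V_N)` -/
def kolWidth (V : Type*) [NormedAddCommGroup V] [NormedSpace ℝ V]
    (N : ℕ) (X : Set V) : ℝ :=
  sInf {r : ℝ | ∃ S : Submodule ℝ V, FiniteDimensional ℝ S ∧
    Module.finrank ℝ S ≤ N ∧
    r = ⨆ x : X, Metric.infDist (x : V) (S : Set V)}

/-- the inner `N`-width `W̄_N(X)`: the infimum, over all subspaces spanned by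
`N` elements of `X`, of `sup_{x ∈ X} dist(x, V_N)` -/
def innerWidth (V : Type*) [NormedAddCommGroup V] [NormedSpace ℝ V]
    (N : ℕ) (X : Set V) : ℝ :=
  sInf {r : ℝ | ∃ xs : Fin N → V, (∀ i, xs i ∈ X) ∧
    r = ⨆ x : X, Metric.infDist (x : V)
      ((Submodule.span ℝ (Set.range xs) : Submodule ℝ V) : Set V)}

end

/-! Let `S` be a subspace of dimension at most `N` with `infDist x S ≤ r` on `X`, and pick for
each `x ∈ X` a point `p x ∈ S` with `‖x - p x‖ < r + ε`. If the `p x` span a space of dimension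
`n ≤ N`, choose `x₁, …, xₙ ∈ X` for which the volume `|det (p x₁, …, p xₙ)|` is within a factor
`1 + ε` of its supremum. Writing `p x = ∑ cⱼ • p xⱼ`, Cramer's rule says that replacing `xⱼ`
by `x` multiplies the volume by `|cⱼ|`, so `|cⱼ| ≤ 1 + ε`. Hence
`x - ∑ cⱼ • xⱼ = (x - p x) + ∑ cⱼ • (p xⱼ - xⱼ)` has norm at most `(r + ε) (1 + N (1 + ε))`.
Letting `ε → 0` gives `(N + 1) r`. -/

open Set Submodule Module Metric Bornology

theorem Module.Basis.exists_det_comp_ne_zero {K E ι κ : Type*} [Field K] [AddCommGroup E]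
    [Module K E] [Fintype κ] [DecidableEq κ] (b : Basis κ K E) {f : ι → E}
    (hf : span K (range f) = ⊤) : ∃ t : κ → ι, b.det (f ∘ t) ≠ 0 := by
  obtain ⟨κ', a, -, hspan, hli⟩ := exists_linearIndependent' K f
  let b' := Basis.mk hli (hspan.trans hf).ge
  refine ⟨a ∘ (b'.indexEquiv b).symm, ?_⟩
  have h := (b.isUnit_det (b'.reindex (b'.indexEquiv b))).ne_zero
  rwa [Basis.coe_reindex, Basis.coe_mk] at h

theorem Module.Basis.bddAbove_range_abs_det_comp {E ι κ : Type*} [NormedAddCommGroup E]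
    [NormedSpace ℝ E] [Fintype κ] [DecidableEq κ] (b : Basis κ ℝ E) {f : ι → E}
    (hf : IsBounded (range f)) :
    BddAbove (range fun t : κ → ι => |b.det (f ∘ t)|) := by
  obtain ⟨c, hc⟩ := isBounded_iff_forall_norm_le.mp
    (b.equivFunL.lipschitz.isBounded_image hf)
  refine ⟨(Fintype.card κ).factorial • c ^ Fintype.card κ, ?_⟩
  rintro _ ⟨t, rfl⟩
  dsimp only
  rw [b.det_apply]
  refine Matrix.det_le (abv := AbsoluteValue.abs) fun i j => ?_
  calc |b.toMatrix (f ∘ t) i j| = ‖b.equivFunL (f (t j)) i‖ := by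
        simp [Basis.toMatrix_apply]
    _ ≤ ‖b.equivFunL (f (t j))‖ := norm_le_pi_norm _ i
    _ ≤ c := hc _ ⟨f (t j), mem_range_self _, rfl⟩

theorem exists_fin_finrank_abs_coeff_le {E ι : Type*} [NormedAddCommGroup E] [NormedSpace ℝ E]
    [FiniteDimensional ℝ E] {f : ι → E} (hf : IsBounded (range f))
    (hspan : span ℝ (range f) = ⊤) {q : ℝ} (hq : 1 < q) :
    ∃ t : Fin (finrank ℝ E) → ι, ∀ i, ∃ c : Fin (finrank ℝ E) → ℝ,
      (∀ j, |c j| ≤ q) ∧ f i = ∑ j, c j • f (t j) := by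
  let b := finBasis ℝ E
  have hbdd := b.bddAbove_range_abs_det_comp hf
  set D := ⨆ t, |b.det (f ∘ t)|
  obtain ⟨t₀, ht₀⟩ := b.exists_det_comp_ne_zero hspan
  have hD : 0 < D := (abs_pos.2 ht₀).trans_le (le_ciSup hbdd t₀)
  have : Nonempty (Fin (finrank ℝ E) → ι) := ⟨t₀⟩
  obtain ⟨t, ht⟩ := exists_lt_of_lt_ciSup (div_lt_self hD hq)
  have hdet : 0 < |b.det (f ∘ t)| := (div_pos hD (by linarith)).trans ht
  obtain ⟨hli, hsp⟩ := b.is_basis_iff_det.2 (isUnit_iff_ne_zero.2 (abs_pos.1 hdet))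
  let b' := Basis.mk hli hsp.ge
  refine ⟨t, fun i => ⟨fun j => b'.coord j (f i), fun j => ?_, ?_⟩⟩
  · have hcramer : b.det (f ∘ t) * b'.coord j (f i) = b.det (f ∘ Function.update t j i) := by
      simpa only [LinearMap.smul_apply, MultilinearMap.toLinearMap_apply, smul_eq_mul,
        AlternatingMap.coe_multilinearMap, Function.comp_update] using
        congrArg (· (f i)) (b.det_smul_mk_coord_eq_det_update hli hsp.ge j)
    have hle : |b.det (f ∘ t)| * |b'.coord j (f i)| ≤ D :=
      (abs_mul _ _).symm.trans_le (hcramer ▸ le_ciSup hbdd _)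
    rw [div_lt_iff₀ (by linarith)] at ht
    nlinarith
  · simpa [b'] using (b'.sum_repr (f i)).symm

theorem exists_fin_finrank_span_abs_coeff_le {V ι : Type*} [NormedAddCommGroup V]
    [NormedSpace ℝ V] {f : ι → V} (hf : IsBounded (range f))
    [FiniteDimensional ℝ (span ℝ (range f))] {q : ℝ} (hq : 1 < q) :
    ∃ t : Fin (finrank ℝ (span ℝ (range f))) → ι, ∀ i, ∃ c : Fin _ → ℝ,
      (∀ j, |c j| ≤ q) ∧ f i = ∑ j, c j • f (t j) := by
  let g : ι → span ℝ (range f) := fun i => ⟨f i, subset_span (mem_range_self i)⟩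
  have hg : IsBounded (range g) := by
    obtain ⟨C, hC⟩ := isBounded_iff_forall_norm_le.1 hf
    exact isBounded_iff_forall_norm_le.2 ⟨C, by rintro _ ⟨i, rfl⟩; exact hC _ ⟨i, rfl⟩⟩
  have hspan : span ℝ (range g) = ⊤ := by
    convert span_span_coe_preimage (R := ℝ) (s := range f)
    ext ⟨v, hv⟩
    simp [g]
  obtain ⟨t, ht⟩ := exists_fin_finrank_abs_coeff_le hg hspan hq
  refine ⟨t, fun i => ?_⟩
  obtain ⟨c, hc, hgi⟩ := ht i
  exact ⟨c, hc, by simpa [g] using congrArg Subtype.val hgi⟩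

theorem exists_fin_range_subset_range {α : Type*} [Nonempty α] {m N : ℕ} (h : m ≤ N)
    (u : Fin m → α) : ∃ v : Fin N → α, range u ⊆ range v :=
  ⟨Function.extend (Fin.castLE h) u fun _ => Classical.arbitrary α, by
    rintro _ ⟨j, rfl⟩
    exact ⟨Fin.castLE h j, (Fin.castLE_injective h).extend_apply _ _ _⟩⟩

theorem norm_sub_sum_smul_le {E ι : Type*} [SeminormedAddCommGroup E] [NormedSpace ℝ E]
    [Fintype ι] {x y : E} {u v : ι → E} {c : ι → ℝ} {ρ q : ℝ} (hy : y = ∑ j, c j • v j)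
    (hxy : ‖x - y‖ ≤ ρ) (huv : ∀ j, ‖u j - v j‖ ≤ ρ) (hc : ∀ j, |c j| ≤ q) :
    ‖x - ∑ j, c j • u j‖ ≤ ρ * (1 + Fintype.card ι * q) := by
  have hsplit : x - ∑ j, c j • u j = (x - y) - ∑ j, c j • (u j - v j) := by
    simp only [hy, smul_sub, Finset.sum_sub_distrib]
    abel
  have hterm : ∀ j, ‖c j • (u j - v j)‖ ≤ q * ρ := fun j => by
    rw [norm_smul, Real.norm_eq_abs]
    exact mul_le_mul (hc j) (huv j) (norm_nonneg _) ((abs_nonneg _).trans (hc j))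
  calc ‖x - ∑ j, c j • u j‖ ≤ ‖x - y‖ + ∑ j, ‖c j • (u j - v j)‖ :=
        hsplit ▸ (norm_sub_le _ _).trans (add_le_add_right (norm_sum_le _ _) _)
    _ ≤ ρ + ∑ _j : ι, q * ρ := add_le_add hxy (Finset.sum_le_sum fun j _ => hterm j)
    _ = ρ * (1 + Fintype.card ι * q) := by
        rw [Finset.sum_const, Finset.card_univ, nsmul_eq_mul]
        ring

theorem exists_fin_infDist_span_le_of_infDist_le {V : Type*} [NormedAddCommGroup V]
    [NormedSpace ℝ V] {X : Set V} (hX : IsBounded X) (hne : X.Nonempty) {S : Submodule ℝ V}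
    [FiniteDimensional ℝ S] {N : ℕ} (hSN : finrank ℝ S ≤ N) {r : ℝ}
    (hr : ∀ x ∈ X, infDist x S ≤ r) {ε q : ℝ} (hε : 0 < ε) (hq : 1 < q) :
    ∃ xs : Fin N → V, (∀ i, xs i ∈ X) ∧
      ∀ x ∈ X, infDist x (span ℝ (range xs)) ≤ (r + ε) * (1 + N * q) := by
  have hproj : ∀ x : X, ∃ s ∈ S, ‖(x : V) - s‖ < r + ε := fun x => by
    simpa only [dist_eq_norm, SetLike.mem_coe] using
      (infDist_lt_iff ⟨0, S.zero_mem⟩).1 ((hr x x.2).trans_lt (lt_add_of_pos_right r hε))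
  choose p hpS hp using hproj
  have hpX : range p ⊆ cthickening (r + ε) X := by
    rintro _ ⟨x, rfl⟩
    refine mem_cthickening_of_dist_le _ _ _ _ x.2 ?_
    rw [dist_comm, dist_eq_norm]
    exact (hp x).le
  have hTS : span ℝ (range p) ≤ S := span_le.2 (range_subset_iff.2 hpS)
  have := Submodule.finiteDimensional_of_le hTS
  have := hne.to_subtype
  obtain ⟨t, ht⟩ := exists_fin_finrank_span_abs_coeff_le (hX.cthickening.subset hpX) hq
  obtain ⟨xs, hxs⟩ := exists_fin_range_subset_range ((Submodule.finrank_mono hTS).trans hSN) t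
  refine ⟨Subtype.val ∘ xs, fun i => (xs i).2, fun x hx => ?_⟩
  obtain ⟨c, hc, hpx⟩ := ht ⟨x, hx⟩
  have hmem : ∑ j, c j • (t j : V) ∈ span ℝ (range (Subtype.val ∘ xs)) :=
    sum_mem fun j _ => smul_mem _ _ <| subset_span <| by
      obtain ⟨i, hi⟩ := hxs ⟨j, rfl⟩
      exact ⟨i, by simp [hi]⟩
  have hρ : 0 ≤ r + ε := (norm_nonneg _).trans (hp ⟨x, hx⟩).le
  calc infDist x (span ℝ (range (Subtype.val ∘ xs)))
      ≤ ‖x - ∑ j, c j • (t j : V)‖ := dist_eq_norm x _ ▸ infDist_le_dist_of_mem hmem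
    _ ≤ (r + ε) * (1 + finrank ℝ (span ℝ (range p)) * q) := by
        simpa using norm_sub_sum_smul_le hpx (hp ⟨x, hx⟩).le (fun j => (hp (t j)).le) hc
    _ ≤ (r + ε) * (1 + N * q) := by
        have hmN : (finrank ℝ (span ℝ (range p)) : ℝ) ≤ N :=
          mod_cast (Submodule.finrank_mono hTS).trans hSN
        gcongr

theorem innerWidth_le_of_forall_infDist_le {V : Type*} [NormedAddCommGroup V]
    [NormedSpace ℝ V] {N : ℕ} {X : Set V} (hne : X.Nonempty) {xs : Fin N → V}
    (hxs : ∀ i, xs i ∈ X) {b : ℝ} (hb : ∀ x ∈ X, infDist x (span ℝ (range xs)) ≤ b) :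
    innerWidth V N X ≤ b := by
  have := hne.to_subtype
  rw [innerWidth]
  refine le_trans (csInf_le ?_ ⟨xs, hxs, rfl⟩) (ciSup_le fun x : X => hb x x.2)
  refine ⟨0, ?_⟩
  rintro _ ⟨ys, -, rfl⟩
  exact Real.iSup_nonneg fun _ => infDist_nonneg

open Filter Topology in
theorem innerWidth_le_mul_iSup_infDist {V : Type*} [NormedAddCommGroup V] [NormedSpace ℝ V]
    {N : ℕ} {X : Set V} (hX : IsBounded X) (hne : X.Nonempty) (S : Submodule ℝ V)
    [FiniteDimensional ℝ S] (hSN : finrank ℝ S ≤ N) :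
    innerWidth V N X ≤ (N + 1) * ⨆ x : X, infDist (x : V) S := by
  set r := ⨆ x : X, infDist (x : V) S
  have hr : ∀ x ∈ X, infDist x S ≤ r := by
    obtain ⟨C, hC⟩ := isBounded_iff_forall_norm_le.1 hX
    refine fun x hx => le_ciSup (f := fun x : X => infDist (x : V) S) ⟨C, ?_⟩ ⟨x, hx⟩
    rintro _ ⟨y, rfl⟩
    simpa using (infDist_le_dist_of_mem S.zero_mem).trans (by simpa using hC y y.2)
  have hlim : Tendsto (fun ε => (r + ε) * (1 + N * (1 + ε))) (𝓝[>] 0) (𝓝 ((N + 1) * r)) := by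
    have hcont : Continuous fun ε : ℝ => (r + ε) * (1 + N * (1 + ε)) := by fun_prop
    convert (hcont.tendsto 0).mono_left nhdsWithin_le_nhds using 2
    ring
  refine ge_of_tendsto hlim (eventually_nhdsWithin_of_forall fun ε (hε : 0 < ε) => ?_)
  obtain ⟨xs, hxs, hb⟩ := exists_fin_infDist_span_le_of_infDist_le hX hne hSN hr hε
    (lt_add_of_pos_right 1 hε)
  exact innerWidth_le_of_forall_infDist_le hne hxs hb

theorem inner_width_le_general (V : Type*) [NormedAddCommGroup V] [NormedSpace ℝ V]
    (N : ℕ) (X : Set V) (hne : X.Nonempty) (hX : IsCompact X) :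
    innerWidth V N X ≤ ((N : ℝ) + 1) * kolWidth V N X := by
  rw [kolWidth, ← smul_eq_mul, ← Real.sInf_smul_of_nonneg (by positivity)]
  refine le_csInf (Set.Nonempty.smul_set ⟨_, ⊥, inferInstance, by simp, rfl⟩) ?_
  rintro _ ⟨_, ⟨S, hS, hSN, rfl⟩, rfl⟩
  exact innerWidth_le_mul_iSup_infDist hX.isBounded hne S hSN

/-- Theorem: the inner `N`-width is controlled by the
Kolmogorov `N`-width: `W̄_N(X) ≤ (N+1) W_N(X)`. -/
theorem inner_width_le (V : Type*) [NormedAddCommGroup V] [NormedSpace ℝ V]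
    (N : ℕ) (hN : 1 ≤ N) (X : Set V) (hne : X.Nonempty) (hX : IsCompact X) :
    innerWidth V N X ≤ ((N : ℝ) + 1) * kolWidth V N X :=
  inner_width_le_general V N X hne hX
end
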